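/- Let n ≥ 2 and let i be an integer with 1 ≤ i ≤ n/2. Then every partition λ of n that is an i-cycle detector satisfies λ ⊴ (n−i, i) in the dominance (majorization) order; that is, (n−i, i) is the unique maximum of the dominance order among i-cycle detectors of n. -/

import Mathlib

/-- The `j`-th part (1-indexed) of a partition given as a list of parts in decreasing
order, padded with zeros beyond the end. -/
def part (l : List ℕ) (j : ℕ) : ℕ := l.getD (j - 1) 0

/-- The `j`-th part (1-indexed) of the conjugate partition: `λ′_j = #{m : λ_m ≥ j}`. -/
def conjPart (l : List ℕ) (j : ℕ) : ℕ := (l.filter (fun x => j ≤ x)).length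

/-- `λ` is an `i`-cycle detector if the hooks at cells `(2,1)` and `(1,2)` both have
length at least `i`, i.e. `λ_2 + λ′_1 − 2 ≥ i` and `λ′_2 + λ_1 − 2 ≥ i`. -/
def IsCycleDetector (l : List ℕ) (i : ℕ) : Prop :=
  i + 2 ≤ part l 2 + conjPart l 1 ∧ i + 2 ≤ conjPart l 2 + part l 1

/-- Partial sum of the first `m` parts. -/
def psum (l : List ℕ) (m : ℕ) : ℕ := (l.take m).sum

/-!
The hook at `(2,1)` has length `λ₂ + ℓ(λ) − 2`, which is at most `λ₂ + λ₃ + ⋯ = n − λ₁`,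
since each of the `ℓ(λ) − 2` parts after the second is at least `1`; hence `λ₁ ≤ n − i`.
A partition of `n` with first part at most `n − i` is dominated by `(n − i, i)`, whose partial
sums reach `n` already at the second one.
-/

theorem conjPart_one_eq_length {l : List ℕ} (hpos : ∀ x ∈ l, 0 < x) :
    conjPart l 1 = l.length :=
  congrArg List.length <| List.filter_eq_self.mpr fun x hx => decide_eq_true (hpos x hx)

theorem psum_le_sum (l : List ℕ) (m : ℕ) : psum l m ≤ l.sum :=
  (List.take_sublist m l).sum_le_sum fun _ _ => Nat.zero_le _

theorem psum_one (l : List ℕ) : psum l 1 = part l 1 := by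
  cases l <;> simp [psum, part]

theorem part_one_add_le_sum {l : List ℕ} {i : ℕ} (hpos : ∀ x ∈ l, 0 < x)
    (hhook : i + 2 ≤ part l 2 + conjPart l 1) : part l 1 + i ≤ l.sum := by
  rw [conjPart_one_eq_length hpos] at hhook
  rcases l with _ | ⟨a, _ | ⟨b, t⟩⟩
  · simp [part] at hhook
  · simp [part] at hhook
  · have ht : t.length ≤ t.sum :=
      t.length_le_sum_of_one_le fun x hx => hpos x (by simp [hx])
    simp only [part, List.length_cons, List.sum_cons, Nat.add_one_sub_one, List.getD_cons_succ,
      List.getD_cons_zero, Nat.sub_self] at hhook ⊢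
    omega

theorem psum_le_psum_pair {l : List ℕ} {a b : ℕ} (hfirst : part l 1 ≤ a)
    (hsum : l.sum ≤ a + b) : ∀ m, psum l m ≤ psum [a, b] m
  | 0 => le_rfl
  | 1 => by rw [psum_one]; exact hfirst
  | m + 2 => (psum_le_sum l _).trans (by simpa [psum] using hsum)

theorem cycle_detector_dominated_general (n i : ℕ)
    (l : List ℕ) (hpos : ∀ x ∈ l, 0 < x) (hsum : l.sum = n)
    (hdet : IsCycleDetector l i) :
    ∀ m : ℕ, psum l m ≤ psum [n - i, i] m := by
  have hfirst : part l 1 + i ≤ n := hsum ▸ part_one_add_le_sum hpos hdet.1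
  exact psum_le_psum_pair (by omega) (by omega)

/-- Every `i`-cycle detector `λ` of `n` satisfies `λ ⊴ (n−i, i)` in the dominance
order: `(n−i, i)` is the maximum of the dominance order among `i`-cycle detectors. -/
theorem cycle_detector_dominated (n i : ℕ) (hn : 2 ≤ n) (hi1 : 1 ≤ i) (hi2 : 2 * i ≤ n)
    (l : List ℕ) (hs : l.Pairwise (· ≥ ·)) (hpos : ∀ x ∈ l, 0 < x) (hsum : l.sum = n)
    (hdet : IsCycleDetector l i) :
    ∀ m : ℕ, psum l m ≤ psum [n - i, i] m :=
  cycle_detector_dominated_general n i l hpos hsum hdet
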